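/- Let 1 ≤ i < j ≤ n with BWT[i] = BWT[j] and SA[i] > 1 and SA[j] > 1. Then LF(i) < LF(j); that is, the last-to-first mapping is strictly increasing on positions of the BWT holding equal characters. -/

import Mathlib

variable {α : Type*} [LinearOrder α]

/-- The suffix `T[p..n]` of a 1-indexed string `T[1..n]`, as a list. -/
def sfx (T : ℕ → α) (n p : ℕ) : List α :=
  (List.range (n + 1 - p)).map (fun d => T (p + d))

/-- The Burrows–Wheeler transform determined by the text `T`, its suffix array `SA`,
and the end-of-string character `dollar`:  `BWT[i] = T[SA[i]-1]` if `SA[i] > 1`,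
and `BWT[i] = $` if `SA[i] = 1`. -/
def bwt (T : ℕ → α) (SA : ℕ → ℕ) (dollar : α) (i : ℕ) : α :=
  if SA i = 1 then dollar else T (SA i - 1)

/-! Equal BWT characters mean the suffixes at `SA[i] - 1` and `SA[j] - 1` are the suffixes at
`SA[i]` and `SA[j]` with the same character prepended, so they are ordered as those are; and
since `SA` sorts the suffixes strictly, `ISA` of a suffix is its rank in that order. -/

theorem sfx_eq_cons {β : Type*} (T : ℕ → β) {n p : ℕ} (hp : p ≤ n) :
    sfx T n p = T p :: sfx T n (p + 1) := by
  rw [sfx, sfx, show n + 1 - p = n + 1 - (p + 1) + 1 by omega, List.range_succ_eq_map,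
    List.map_cons, List.map_map]
  congr 1
  exact List.map_congr_left fun d _ => congrArg T (by omega)

theorem sfx_pred_lt_sfx_pred (T : ℕ → α) {n p q : ℕ} (hp : 1 ≤ p) (hpn : p ≤ n + 1)
    (hq : 1 ≤ q) (hqn : q ≤ n + 1) (hT : T (p - 1) = T (q - 1)) (hlt : sfx T n p < sfx T n q) :
    sfx T n (p - 1) < sfx T n (q - 1) := by
  rw [sfx_eq_cons T (by omega : p - 1 ≤ n), sfx_eq_cons T (by omega : q - 1 ≤ n),
    Nat.sub_add_cancel hp, Nat.sub_add_cancel hq, hT]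
  exact List.Lex.cons hlt

theorem bwt_of_one_lt {β : Type*} (T : ℕ → β) (SA : ℕ → ℕ) (dollar : β) {i : ℕ}
    (h : 1 < SA i) :
    bwt T SA dollar i = T (SA i - 1) :=
  if_neg h.ne'

theorem statement13_general
    (n : ℕ) (T : ℕ → α) (dollar : α) (SA : ℕ → ℕ)
    -- `SA` is a permutation of `{1,...,n}` sorting the suffixes lexicographically
    (hSAran : ∀ i, 1 ≤ i → i ≤ n → 1 ≤ SA i ∧ SA i ≤ n)
    (hSAmono : ∀ i j, 1 ≤ i → i < j → j ≤ n → sfx T n (SA i) < sfx T n (SA j))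
    -- `ISA` is the inverse permutation of `SA`
    (ISA : ℕ → ℕ)
    (hISAran : ∀ p, 1 ≤ p → p ≤ n → 1 ≤ ISA p ∧ ISA p ≤ n ∧ SA (ISA p) = p)
    (i j : ℕ) (hi : 1 ≤ i) (hij : i < j) (hj : j ≤ n)
    (heq : bwt T SA dollar i = bwt T SA dollar j)
    (hSAi : 1 < SA i) (hSAj : 1 < SA j) :
    ISA (SA i - 1) < ISA (SA j - 1) := by
  have hmono : StrictMonoOn (fun k => sfx T n (SA k)) (Set.Icc 1 n) :=
    fun a ha b hb hab => hSAmono a b ha.1 hab hb.2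
  have hSAin := (hSAran i hi (by omega)).2
  have hSAjn := (hSAran j (by omega) hj).2
  obtain ⟨hp1, hpn, hSAp⟩ := hISAran (SA i - 1) (by omega) (by omega)
  obtain ⟨hq1, hqn, hSAq⟩ := hISAran (SA j - 1) (by omega) (by omega)
  rw [← hmono.lt_iff_lt ⟨hp1, hpn⟩ ⟨hq1, hqn⟩]
  simp only [hSAp, hSAq]
  rw [bwt_of_one_lt T SA dollar hSAi, bwt_of_one_lt T SA dollar hSAj] at heq
  exact sfx_pred_lt_sfx_pred T hSAi.le (by omega) hSAj.le (by omega) heq (hSAmono i j hi hij hj)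

/-- The last-to-first mapping `LF(i) = ISA[SA[i]-1]` is strictly
increasing on positions of the BWT holding equal characters: if `i < j`,
`BWT[i] = BWT[j]`, `SA[i] > 1` and `SA[j] > 1`, then `LF(i) < LF(j)`. -/
theorem statement13
    (n : ℕ) (T : ℕ → α) (dollar : α) (SA : ℕ → ℕ)
    -- `T[1..n]` is a string of length `n ≥ 1` ending with `$`,
    -- which is smaller than every other character and occurs only at position `n`
    (hn : 1 ≤ n) (hTn : T n = dollar)
    (hdollar : ∀ p, 1 ≤ p → p < n → dollar < T p)
    -- `SA` is a permutation of `{1,...,n}` sorting the suffixes lexicographically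
    (hSAran : ∀ i, 1 ≤ i → i ≤ n → 1 ≤ SA i ∧ SA i ≤ n)
    (hSAsurj : ∀ p, 1 ≤ p → p ≤ n → ∃ i, 1 ≤ i ∧ i ≤ n ∧ SA i = p)
    (hSAmono : ∀ i j, 1 ≤ i → i < j → j ≤ n → sfx T n (SA i) < sfx T n (SA j))
    -- `ISA` is the inverse permutation of `SA`
    (ISA : ℕ → ℕ)
    (hISA : ∀ i, 1 ≤ i → i ≤ n → ISA (SA i) = i)
    (hISAran : ∀ p, 1 ≤ p → p ≤ n → 1 ≤ ISA p ∧ ISA p ≤ n ∧ SA (ISA p) = p)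
    (i j : ℕ) (hi : 1 ≤ i) (hij : i < j) (hj : j ≤ n)
    (heq : bwt T SA dollar i = bwt T SA dollar j)
    (hSAi : 1 < SA i) (hSAj : 1 < SA j) :
    ISA (SA i - 1) < ISA (SA j - 1) :=
  statement13_general n T dollar SA hSAran hSAmono ISA hISAran i j hi hij hj heq hSAi hSAj
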